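/- arXiv:2009.12869 — 2 statements merged into one kernel-verified Lean document; each statement's English description precedes it below -/
import Mathlib

section
/- Let Q₁ = Aff(A₁, f₁) and Q₂ = Aff(A₂, f₂) be affine quandles over Λ-modules M₁ and M₂ (where t acts by f_i). A map h : Q₁ → Q₂ with h(0) = b is a quandle homomorphism if and only if h(x) = g(x) + b for some Λ-module homomorphism g : M₁ → M₂. (In particular, for any Λ-module homomorphism g and any b, the map x ↦ g(x) + b is a quandle homomorphism.) -/
/-!
Put `g := h - h 0`. Taking `y = 0` in the homomorphism relation shows that `g` commutes with `t`.
Writing `a = t • a'` and `b = (1 - t) • y` (connectedness of the source) gives `a + b = a' * y`,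
and expanding both sides yields `g (a + b) = g a + g b`. The scalars whose action commutes with an additive map
form a subring, closed under inverses; one containing `t` is all of `ℤ[t, t⁻¹]`.
-/

open LaurentPolynomial

section AffineQuandle

variable {R M₁ M₂ : Type*} [CommRing R] [AddCommGroup M₁] [AddCommGroup M₂] [Module R M₁]
  [Module R M₂]

/-- Quandle homomorphisms `Aff(M₁, t) → Aff(M₂, t)`, where `x * y = t • x + (1 - t) • y`. -/
def IsAffineQuandleHom (t : R) (h : M₁ → M₂) : Prop :=
  ∀ x y : M₁, h (t • x + (1 - t) • y) = t • h x + (1 - t) • h y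

theorem isAffineQuandleHom_linearMap_add (t : R) (g : M₁ →ₗ[R] M₂) (b : M₂) :
    IsAffineQuandleHom t fun x => g x + b := by
  intro x y
  simp only [map_add, map_smul]
  module

namespace IsAffineQuandleHom

variable {t : R} {h : M₁ → M₂}

theorem apply_smul (hh : IsAffineQuandleHom t h) (x : M₁) :
    h (t • x) = t • h x + (1 - t) • h 0 := by
  simpa using hh x 0

theorem apply_one_sub_smul (hh : IsAffineQuandleHom t h) (y : M₁) :
    h ((1 - t) • y) = t • h 0 + (1 - t) • h y := by
  simpa using hh 0 y

theorem sub_apply_zero_smul (hh : IsAffineQuandleHom t h) (x : M₁) :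
    h (t • x) - h 0 = t • (h x - h 0) := by
  rw [hh.apply_smul]
  module

theorem sub_apply_zero_add (hh : IsAffineQuandleHom t h) (ht : IsUnit t)
    (hsurj : ∀ m : M₁, ∃ u : M₁, m = (1 - t) • u) (a b : M₁) :
    h (a + b) - h 0 = (h a - h 0) + (h b - h 0) := by
  obtain ⟨y, rfl⟩ := hsurj b
  obtain ⟨a', rfl⟩ : ∃ a', a = t • a' := ⟨ht.unit⁻¹ • a, (smul_inv_smul ht.unit a).symm⟩
  rw [hh, hh.apply_smul, hh.apply_one_sub_smul]
  module

end IsAffineQuandleHom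

end AffineQuandle

section SmulComm

variable {R M₁ M₂ : Type*} [Ring R] [AddCommGroup M₁] [AddCommGroup M₂] [Module R M₁]
  [Module R M₂]

def AddMonoidHom.smulCommSubring (g : M₁ →+ M₂) : Subring R where
  carrier := {c | ∀ x, g (c • x) = c • g x}
  one_mem' := by simp
  zero_mem' := by simp
  add_mem' ha hb x := by simp only [add_smul, map_add, ha x, hb x]
  mul_mem' ha hb x := by simp only [mul_smul, ha _, hb x]
  neg_mem' ha x := by simp only [neg_smul, map_neg, ha x]

theorem AddMonoidHom.invOf_mem_smulCommSubring (g : M₁ →+ M₂) {a : R} [Invertible a]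
    (ha : a ∈ g.smulCommSubring) : ⅟a ∈ g.smulCommSubring := fun x => by
  calc g (⅟a • x) = ⅟a • a • g (⅟a • x) := by rw [smul_smul, invOf_mul_self, one_smul]
    _ = ⅟a • g x := by rw [← ha, smul_smul, mul_invOf_self, one_smul]

end SmulComm

theorem LaurentPolynomial.T_mem_of_T_one_mem {S : Subring (LaurentPolynomial ℤ)}
    (h₁ : T 1 ∈ S) (h₂ : T (-1) ∈ S) (n : ℤ) : T n ∈ S := by
  cases n with
  | ofNat n => simpa [T_pow] using pow_mem h₁ n
  | negSucc n => simpa [T_pow, Int.negSucc_eq] using pow_mem h₂ (n + 1)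

theorem LaurentPolynomial.subring_eq_top_of_T_one_mem {S : Subring (LaurentPolynomial ℤ)}
    (h₁ : T 1 ∈ S) (h₂ : T (-1) ∈ S) : S = ⊤ := by
  refine eq_top_iff.mpr fun p _ => p.induction_on' (fun _ _ => add_mem) fun n a => ?_
  rw [eq_intCast C a]
  exact mul_mem (intCast_mem S a) (T_mem_of_T_one_mem h₁ h₂ n)

theorem stmt_11_general {M₁ M₂ : Type*} [AddCommGroup M₁] [AddCommGroup M₂]
    [Module (LaurentPolynomial ℤ) M₁] [Module (LaurentPolynomial ℤ) M₂]
    (hconn₁ : ∀ m : M₁, ∃ u : M₁, m = (1 - T 1 : LaurentPolynomial ℤ) • u)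
    (h : M₁ → M₂) :
    (∀ x y : M₁,
      h ((T 1 : LaurentPolynomial ℤ) • x + (1 - T 1 : LaurentPolynomial ℤ) • y)
        = (T 1 : LaurentPolynomial ℤ) • h x +
          (1 - T 1 : LaurentPolynomial ℤ) • h y) ↔
    ∃ g : M₁ →ₗ[LaurentPolynomial ℤ] M₂, ∀ x : M₁, h x = g x + h 0 := by
  constructor
  · intro (hh : IsAffineQuandleHom (T 1) h)
    let g : M₁ →+ M₂ :=
      AddMonoidHom.mk' (fun x => h x - h 0) (hh.sub_apply_zero_add (isUnit_T 1) hconn₁)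
    have hT : T 1 ∈ g.smulCommSubring := hh.sub_apply_zero_smul
    have hS : g.smulCommSubring = ⊤ :=
      subring_eq_top_of_T_one_mem hT (g.invOf_mem_smulCommSubring hT)
    have hmem (c : LaurentPolynomial ℤ) : c ∈ g.smulCommSubring := hS ▸ Subring.mem_top c
    exact ⟨{ g with map_smul' := hmem }, fun x => (sub_add_cancel _ _).symm⟩
  · rintro ⟨g, hg⟩ x y
    rw [hg (_ + _), hg x, hg y]
    exact isAffineQuandleHom_linearMap_add _ g (h 0) x y

/-- For connected affine quandles Aff(M₁, t), Aff(M₂, t) over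
Λ = ℤ[t,t⁻¹], a map h : M₁ → M₂ is a quandle homomorphism iff
h(x) = g(x) + h(0) for some Λ-module homomorphism g. -/
theorem stmt_11 {M₁ M₂ : Type*} [AddCommGroup M₁] [AddCommGroup M₂]
    [Module (LaurentPolynomial ℤ) M₁] [Module (LaurentPolynomial ℤ) M₂]
    (hconn₁ : ∀ m : M₁, ∃ u : M₁, m = (1 - T 1 : LaurentPolynomial ℤ) • u)
    (hconn₂ : ∀ m : M₂, ∃ u : M₂, m = (1 - T 1 : LaurentPolynomial ℤ) • u)
    (h : M₁ → M₂) :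
    (∀ x y : M₁,
      h ((T 1 : LaurentPolynomial ℤ) • x + (1 - T 1 : LaurentPolynomial ℤ) • y)
        = (T 1 : LaurentPolynomial ℤ) • h x +
          (1 - T 1 : LaurentPolynomial ℤ) • h y) ↔
    ∃ g : M₁ →ₗ[LaurentPolynomial ℤ] M₂, ∀ x : M₁, h x = g x + h 0 :=
  stmt_11_general hconn₁ h
end

section
/- Let (X, H) be an augmented quandle with augmentation ε₀ : X → H, ι : H → G an injective group homomorphism, and let ∼ on X × G be the equivalence relation (x, ι(b)g) ∼ (x·b, g). Then the pair ((X × G)/∼, G), with G acting on the second coordinate by right multiplication and augmentation ε[x, g] = g^{-1} ι(ε₀(x)) g, is an augmented quandle: it satisfies [x,g]^{ε[x,g]} = [x,g] and ε([x,g]^h) = h^{-1} ε[x,g] h. -/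
/-!
Right multiplication on `G` and the conjugate `g⁻¹ ι(ε₀ x) g` are both constant on
`∼`-classes: `(x, ι(b) g) ↦ (x·b, g)` changes `g` only on the left, and the shift of
`ε₀` by `b` is absorbed by `aug2`. The quandle axioms then reduce to computations in `G`,
except `[x, g]^{ε[x, g]} = [x, ι(ε₀ x) g] = [x·ε₀(x), g]`, which is `aug1`.
-/

/-- The equivalence relation on X × G from the satellite knot decomposition:
(x, g) ∼ (y, h) iff ∃ b ∈ H, g = ι(b) h and y = x·b. -/
def satRel {X H G : Type*} [Group H] [Group G] (act : X → H → X) (ι : H →* G) :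
    X × G → X × G → Prop :=
  fun p q => ∃ b : H, p.2 = ι b * q.2 ∧ q.1 = act p.1 b

namespace satRel

variable {X H G : Type*} [Group H] [Group G] {act : X → H → X} {ι : H →* G}

theorem mul_right {p q : X × G} (h : satRel act ι p q) (k : G) :
    satRel act ι (p.1, p.2 * k) (q.1, q.2 * k) := by
  obtain ⟨b, hg, hx⟩ := h
  exact ⟨b, by rw [hg, mul_assoc], hx⟩

theorem conj_eq {ε₀ : X → H} (aug2 : ∀ x b, ε₀ (act x b) = b⁻¹ * ε₀ x * b)
    {p q : X × G} (h : satRel act ι p q) :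
    p.2⁻¹ * ι (ε₀ p.1) * p.2 = q.2⁻¹ * ι (ε₀ q.1) * q.2 := by
  obtain ⟨b, hg, hx⟩ := h
  rw [hg, hx, aug2]
  simp only [map_mul, map_inv, mul_inv_rev, mul_assoc]

end satRel

section SatelliteQuandle

variable {X H G : Type*} [Group H] [Group G] (act : X → H → X) (ι : H →* G)

def satAct (q : Quot (satRel act ι)) (k : G) : Quot (satRel act ι) :=
  Quot.lift (fun p => Quot.mk _ (p.1, p.2 * k)) (fun _ _ h => Quot.sound (h.mul_right k)) q

def satAug (ε₀ : X → H) (aug2 : ∀ x b, ε₀ (act x b) = b⁻¹ * ε₀ x * b) :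
    Quot (satRel act ι) → G :=
  Quot.lift (fun p => p.2⁻¹ * ι (ε₀ p.1) * p.2) (fun _ _ h => h.conj_eq aug2)

variable {act ι}

@[simp]
theorem satAct_mk (x : X) (g k : G) :
    satAct act ι (Quot.mk _ (x, g)) k = Quot.mk _ (x, g * k) :=
  rfl

@[simp]
theorem satAug_mk {ε₀ : X → H} (aug2 : ∀ x b, ε₀ (act x b) = b⁻¹ * ε₀ x * b) (x : X) (g : G) :
    satAug act ι ε₀ aug2 (Quot.mk _ (x, g)) = g⁻¹ * ι (ε₀ x) * g :=
  rfl

theorem satAct_one (q : Quot (satRel act ι)) : satAct act ι q 1 = q := by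
  obtain ⟨⟨x, g⟩⟩ := q
  simp

theorem satAct_satAct (q : Quot (satRel act ι)) (a b : G) :
    satAct act ι (satAct act ι q a) b = satAct act ι q (a * b) := by
  obtain ⟨⟨x, g⟩⟩ := q
  simp [mul_assoc]

theorem satAct_satAug {ε₀ : X → H} (aug1 : ∀ x, act x (ε₀ x) = x)
    (aug2 : ∀ x b, ε₀ (act x b) = b⁻¹ * ε₀ x * b) (q : Quot (satRel act ι)) :
    satAct act ι q (satAug act ι ε₀ aug2 q) = q := by
  obtain ⟨⟨x, g⟩⟩ := q
  have hg : g * (g⁻¹ * ι (ε₀ x) * g) = ι (ε₀ x) * g := by group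
  rw [satAug_mk, satAct_mk, hg]
  exact Quot.sound ⟨ε₀ x, rfl, (aug1 x).symm⟩

theorem satAug_satAct {ε₀ : X → H} (aug2 : ∀ x b, ε₀ (act x b) = b⁻¹ * ε₀ x * b)
    (q : Quot (satRel act ι)) (k : G) :
    satAug act ι ε₀ aug2 (satAct act ι q k) = k⁻¹ * satAug act ι ε₀ aug2 q * k := by
  obtain ⟨⟨x, g⟩⟩ := q
  rw [satAct_mk, satAug_mk, satAug_mk]
  group

end SatelliteQuandle

theorem stmt_14_general {X H G : Type*} [Group H] [Group G]
    (act : X → H → X)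
    (ε₀ : X → H)
    (aug1 : ∀ x, act x (ε₀ x) = x)
    (aug2 : ∀ x b, ε₀ (act x b) = b⁻¹ * ε₀ x * b)
    (ι : H →* G) :
    ∃ (actG : Quot (satRel act ι) → G → Quot (satRel act ι))
      (ε : Quot (satRel act ι) → G),
      (∀ (x : X) (g k : G),
        actG (Quot.mk _ (x, g)) k = Quot.mk _ (x, g * k)) ∧
      (∀ (x : X) (g : G), ε (Quot.mk _ (x, g)) = g⁻¹ * ι (ε₀ x) * g) ∧
      (∀ q, actG q 1 = q) ∧
      (∀ q a b, actG (actG q a) b = actG q (a * b)) ∧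
      (∀ q, actG q (ε q) = q) ∧
      (∀ q k, ε (actG q k) = k⁻¹ * ε q * k) :=
  ⟨satAct act ι, satAug act ι ε₀ aug2, satAct_mk, satAug_mk aug2, satAct_one, satAct_satAct,
    satAct_satAug aug1 aug2, satAug_satAct aug2⟩

/-- For an augmented quandle (X, H) with augmentation ε₀ and an
injective group homomorphism ι : H → G, the quotient (X × G)/∼ with the right
G-action on the second coordinate and augmentation ε[x,g] = g⁻¹ ι(ε₀(x)) g is
an augmented quandle. -/
theorem stmt_14 {X H G : Type*} [Group H] [Group G]
    (act : X → H → X)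
    (act_one : ∀ x, act x 1 = x)
    (act_mul : ∀ x a b, act (act x a) b = act x (a * b))
    (ε₀ : X → H)
    (aug1 : ∀ x, act x (ε₀ x) = x)
    (aug2 : ∀ x b, ε₀ (act x b) = b⁻¹ * ε₀ x * b)
    (ι : H →* G) (hι : Function.Injective ι) :
    ∃ (actG : Quot (satRel act ι) → G → Quot (satRel act ι))
      (ε : Quot (satRel act ι) → G),
      (∀ (x : X) (g k : G),
        actG (Quot.mk _ (x, g)) k = Quot.mk _ (x, g * k)) ∧
      (∀ (x : X) (g : G), ε (Quot.mk _ (x, g)) = g⁻¹ * ι (ε₀ x) * g) ∧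
      (∀ q, actG q 1 = q) ∧
      (∀ q a b, actG (actG q a) b = actG q (a * b)) ∧
      (∀ q, actG q (ε q) = q) ∧
      (∀ q k, ε (actG q k) = k⁻¹ * ε q * k) :=
  stmt_14_general act ε₀ aug1 aug2 ι
end
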